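/- arXiv:1709.00750 — 3 statements merged into one kernel-verified Lean document; each statement's English description precedes it below -/
import Mathlib

section
/- For n ≥ 1 and k ≥ 1, the function f_{n,k}(z₁,...,zₙ) = (-1)ⁿ ∑_{σ∈Sₙ} ∏_{j=1}^{n} g(z_{σ(1)}^{-1}⋯z_{σ(j-1)}^{-1} z_{σ(j)}^k) / ∏_{j=1}^{n} g(z_{σ(1)}^{-1}⋯z_{σ(j)}^{-1}) satisfies the quasi-periodicity f_{n,k}(qz₁,z₂,...,zₙ) = (-1)^{k-1} q^{-(k+1)(k-2)/2} z₁^{-k²+1} z₂^{k+1}⋯zₙ^{k+1} f_{n,k}(z₁,...,zₙ). -/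
open Finset

/-- Theta function `g(z) = ∑_{i∈ℤ} (-1)^i z^i q^{i(i-1)/2}`. -/
noncomputable def theta (q z : ℂ) : ℂ := ∑' i : ℤ, (-1) ^ i * z ^ i * q ^ (i * (i - 1) / 2)

/-- `f_{n,k}(z₁,…,zₙ) = (-1)ⁿ ∑_{σ∈Sₙ} ∏_{j=1}^n g(z_{σ(1)}^{-1}⋯z_{σ(j-1)}^{-1} z_{σ(j)}^k)
/ ∏_{j=1}^n g(z_{σ(1)}^{-1}⋯z_{σ(j)}^{-1})`. -/
noncomputable def fnk (q : ℂ) (n k : ℕ) (z : Fin n → ℂ) : ℂ :=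
  (-1 : ℂ) ^ n * ∑ σ : Equiv.Perm (Fin n),
    (∏ j : Fin n,
        theta q ((∏ l ∈ univ.filter (fun l => l < j), (z (σ l))⁻¹) * z (σ j) ^ (k : ℤ))) /
    (∏ j : Fin n,
        theta q (∏ l ∈ univ.filter (fun l => l ≤ j), (z (σ l))⁻¹))

/-- All the `g`-denominators occurring in `f_{n,k}` are nonzero at `z`
(i.e. `z` is away from the poles of `f_{n,k}`). -/
def DenOK (q : ℂ) (n : ℕ) (z : Fin n → ℂ) : Prop :=
  ∀ σ : Equiv.Perm (Fin n), ∀ j : Fin n,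
    theta q (∏ l ∈ univ.filter (fun l => l ≤ j), (z (σ l))⁻¹) ≠ 0


/-!
Fix `σ` and put `x = z ∘ σ`, `u_j = x_1⁻¹ ⋯ x_j⁻¹` and `w_j = x_1⁻¹ ⋯ x_{j-1}⁻¹ x_j ^ k`, so that the
`σ`-summand of `f_{n,k}` is `∏_j g(w_j) / g(u_j)`. Replacing `z_1 = x_m` by `q z_1` leaves `u_j`
and `w_j` alone for `j < m`, multiplies `w_m` by `q ^ k` and divides `u_j` (for `j ≥ m`) and
`w_j` (for `j > m`) by `q`. By `g(qz) = -z⁻¹ g(z)`, the `j`-th factor then gets multiplied by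
`w_j / u_j = x_j ^ (k + 1)` for `j > m`, and the `m`-th one by the monomial that supplies
`z_1 ^ (1 - k²)`, the power of `q` and the `x_j ^ (k + 1)` with `j < m`. The total factor does
not depend on `σ`.
-/

open Function

theorem Int.add_one_mul_ediv_two (i : ℤ) : (i + 1) * i / 2 = i * (i - 1) / 2 + i := by
  rw [show (i + 1) * i = i * (i - 1) + i * 2 by ring, Int.add_mul_ediv_right _ _ two_ne_zero]

section Theta

variable {q z : ℂ}

theorem theta_mul_left (hq : q ≠ 0) (hz : z ≠ 0) : theta q (q * z) = -z⁻¹ * theta q z := by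
  rw [theta, theta, ← tsum_mul_left, ← (Equiv.subRight (1 : ℤ)).tsum_eq]
  refine tsum_congr fun i => ?_
  have he : i * (i - 1) / 2 = (i - 1) * (i - 1 - 1) / 2 + (i - 1) := by
    simpa using Int.add_one_mul_ediv_two (i - 1)
  rw [Equiv.subRight_apply, he, zpow_add₀ hq, mul_zpow, zpow_sub_one₀ hz, zpow_sub_one₀ hq,
    zpow_sub_one₀ (by norm_num : (-1 : ℂ) ≠ 0)]
  field_simp

theorem theta_inv_mul (hq : q ≠ 0) (hz : z ≠ 0) :
    theta q (q⁻¹ * z) = -(q⁻¹ * z) * theta q z := by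
  have h := theta_mul_left hq (mul_ne_zero (inv_ne_zero hq) hz)
  rw [mul_inv_cancel_left₀ hq] at h
  rw [h]
  field_simp

theorem theta_pow_mul (hq : q ≠ 0) (hz : z ≠ 0) (k : ℕ) :
    theta q (q ^ k * z) =
      (-1) ^ k * q ^ (-((k : ℤ) * (k - 1) / 2)) * z ^ (-(k : ℤ)) * theta q z := by
  induction k with
  | zero => simp
  | succ k ih =>
    rw [pow_succ', mul_assoc, theta_mul_left hq (mul_ne_zero (pow_ne_zero k hq) hz), ih]
    push_cast
    rw [add_sub_cancel_right, Int.add_one_mul_ediv_two, neg_add, zpow_add₀ hq, neg_add,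
      zpow_add₀ hz]
    simp only [zpow_neg, zpow_natCast, zpow_one]
    ring

end Theta

section Update

variable {ι : Type*} [DecidableEq ι] {s : Finset ι} {m : ι}

theorem prod_comp_update_of_notMem {α M : Type*} [CommMonoid M] (h : m ∉ s) (f : α → M)
    (x : ι → α) (v : α) : ∏ l ∈ s, f (update x m v l) = ∏ l ∈ s, f (x l) :=
  prod_congr rfl fun l hl => by rw [update_of_ne (ne_of_mem_of_not_mem hl h)]

theorem prod_inv_update_mul_self_of_mem {G : Type*} [DivisionCommMonoid G] (h : m ∈ s)
    (x : ι → G) (c : G) : ∏ l ∈ s, (update x m (c * x m) l)⁻¹ = c⁻¹ * ∏ l ∈ s, (x l)⁻¹ := by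
  rw [← mul_prod_erase s _ h, ← mul_prod_erase s _ h, update_self,
    prod_comp_update_of_notMem (notMem_erase m s), mul_inv, mul_assoc]

end Update

theorem prod_univ_erase_comp_equiv {α β M : Type*} [Fintype α] [Fintype β] [DecidableEq α]
    [DecidableEq β] [CommMonoid M] (σ : α ≃ β) (f : β → M) (b : β) :
    ∏ a ∈ univ.erase (σ.symm b), f (σ a) = ∏ b' ∈ univ.erase b, f b' :=
  prod_equiv σ (by simp [Equiv.eq_symm_apply]) (by simp)

theorem prod_erase_eq_prod_Iio_mul_prod_Ioi {ι M : Type*} [Fintype ι] [LinearOrder ι]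
    [LocallyFiniteOrderBot ι] [LocallyFiniteOrderTop ι] [CommMonoid M] (f : ι → M) (m : ι) :
    ∏ j ∈ univ.erase m, f j = (∏ j ∈ Iio m, f j) * ∏ j ∈ Ioi m, f j := by
  rw [← prod_union (disjoint_left.2 fun j hlt hgt => lt_asymm (mem_Iio.1 hlt) (mem_Ioi.1 hgt))]
  congr 1
  ext j
  simp only [mem_union, mem_Iio, mem_Ioi, mem_erase, mem_univ, and_true, ne_iff_lt_or_gt]

section ThetaRatio

variable {ι : Type*} [LinearOrder ι] [LocallyFiniteOrderBot ι] {q : ℂ} {k : ℕ} {x : ι → ℂ}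
  {j m : ι}

noncomputable def thetaRatio (q : ℂ) (k : ℕ) (x : ι → ℂ) (j : ι) : ℂ :=
  theta q ((∏ l ∈ Iio j, (x l)⁻¹) * x j ^ (k : ℤ)) / theta q (∏ l ∈ Iic j, (x l)⁻¹)

theorem fnk_eq_sum_prod_thetaRatio (q : ℂ) (n k : ℕ) (z : Fin n → ℂ) :
    fnk q n k z = (-1) ^ n * ∑ σ : Equiv.Perm (Fin n), ∏ j, thetaRatio q k (z ∘ σ) j := by
  simp only [fnk, thetaRatio, prod_div_distrib, filter_gt_eq_Iio, filter_ge_eq_Iic, comp_apply]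

theorem thetaRatio_update_of_lt (h : j < m) (v : ℂ) :
    thetaRatio q k (update x m v) j = thetaRatio q k x j := by
  rw [thetaRatio, thetaRatio, update_of_ne h.ne, prod_comp_update_of_notMem (by simpa using h.le),
    prod_comp_update_of_notMem (by simpa using h)]

theorem thetaRatio_update_of_gt (hq : q ≠ 0) (hx : ∀ l, x l ≠ 0) (h : m < j) :
    thetaRatio q k (update x m (q * x m)) j = x j ^ ((k : ℤ) + 1) * thetaRatio q k x j := by
  have hP : ∏ l ∈ Iio j, (x l)⁻¹ ≠ 0 := prod_ne_zero_iff.2 fun l _ => inv_ne_zero (hx l)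
  rw [thetaRatio, thetaRatio, update_of_ne h.ne', prod_inv_update_mul_self_of_mem (mem_Iio.2 h),
    prod_inv_update_mul_self_of_mem (mem_Iic.2 h.le), mul_assoc,
    theta_inv_mul hq (mul_ne_zero hP (zpow_ne_zero _ (hx j))), ← mul_prod_Iio_eq_prod_Iic,
    theta_inv_mul hq (mul_ne_zero (inv_ne_zero (hx j)) hP), mul_div_mul_comm,
    zpow_add_one₀ (hx j)]
  congr 1
  generalize ∏ l ∈ Iio j, (x l)⁻¹ = P at hP ⊢
  field_simp

theorem thetaRatio_update_self (hq : q ≠ 0) (hk : 1 ≤ k) (hx : ∀ l, x l ≠ 0) (m : ι) :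
    thetaRatio q k (update x m (q * x m)) m =
      (-1) ^ (k - 1) * q ^ (-(((k : ℤ) + 1) * ((k : ℤ) - 2) / 2)) * x m ^ (-(k : ℤ) ^ 2 + 1) *
        (∏ l ∈ Iio m, x l ^ ((k : ℤ) + 1)) * thetaRatio q k x m := by
  have hQ : ∏ l ∈ Iio m, x l ≠ 0 := prod_ne_zero_iff.2 fun l _ => hx l
  rw [thetaRatio, thetaRatio, update_self, prod_comp_update_of_notMem notMem_Iio_self,
    prod_inv_update_mul_self_of_mem (mem_Iic.2 le_rfl), ← mul_prod_Iio_eq_prod_Iic, mul_zpow,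
    zpow_natCast q, mul_left_comm, prod_inv_distrib,
    theta_pow_mul hq (mul_ne_zero (inv_ne_zero hQ) (zpow_ne_zero _ (hx m))),
    theta_inv_mul hq (mul_ne_zero (inv_ne_zero (hx m)) (inv_ne_zero hQ)), mul_div_mul_comm,
    prod_zpow]
  congr 1
  have he : -(((k : ℤ) + 1) * ((k : ℤ) - 2) / 2) = 1 + -((k : ℤ) * (k - 1) / 2) := by
    rw [show ((k : ℤ) + 1) * (k - 2) = k * (k - 1) + (-1) * 2 by ring,
      Int.add_mul_ediv_right _ _ two_ne_zero]
    ring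
  obtain ⟨k, rfl⟩ : ∃ k', k = k' + 1 := ⟨k - 1, by omega⟩
  rw [he, zpow_add₀ hq,
    show -((k + 1 : ℕ) : ℤ) ^ 2 + 1 = -((k * (k + 2) : ℕ) : ℤ) by push_cast; ring,
    show ((k + 1 : ℕ) : ℤ) + 1 = ((k + 2 : ℕ) : ℤ) by push_cast; ring, Nat.add_sub_cancel]
  generalize q ^ (-(((k + 1 : ℕ) : ℤ) * ((k + 1 : ℕ) - 1) / 2)) = E
  generalize ∏ l ∈ Iio m, x l = Q at hQ ⊢
  have hxm := hx m
  simp only [zpow_neg, zpow_natCast, zpow_one, mul_pow, inv_pow, ← pow_mul]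
  field_simp
  ring

theorem prod_thetaRatio_update [Fintype ι] [LocallyFiniteOrderTop ι] (hq : q ≠ 0) (hk : 1 ≤ k)
    (hx : ∀ l, x l ≠ 0) (m : ι) :
    ∏ j, thetaRatio q k (update x m (q * x m)) j =
      (-1) ^ (k - 1) * q ^ (-(((k : ℤ) + 1) * ((k : ℤ) - 2) / 2)) * x m ^ (-(k : ℤ) ^ 2 + 1) *
        (∏ l ∈ univ.erase m, x l ^ ((k : ℤ) + 1)) * ∏ j, thetaRatio q k x j := by
  rw [← mul_prod_erase univ _ (mem_univ m), ← mul_prod_erase univ (thetaRatio q k x) (mem_univ m),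
    prod_erase_eq_prod_Iio_mul_prod_Ioi, prod_erase_eq_prod_Iio_mul_prod_Ioi,
    prod_erase_eq_prod_Iio_mul_prod_Ioi, thetaRatio_update_self hq hk hx,
    prod_congr rfl fun j hj => thetaRatio_update_of_lt (mem_Iio.1 hj) _,
    prod_congr rfl fun j hj => thetaRatio_update_of_gt hq hx (mem_Ioi.1 hj), prod_mul_distrib]
  ring

end ThetaRatio

theorem fnk_quasi_periodicity_general (q : ℂ) (hq0 : q ≠ 0) (n k : ℕ) (hk : 1 ≤ k)
    (z : Fin (n + 1) → ℂ) (hz : ∀ i, z i ≠ 0) :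
    fnk q (n + 1) k (Function.update z 0 (q * z 0)) =
      (-1 : ℂ) ^ (k - 1) * q ^ (-(((k : ℤ) + 1) * ((k : ℤ) - 2) / 2)) *
        z 0 ^ (-(k : ℤ) ^ 2 + 1) *
        (∏ i ∈ Finset.univ.erase (0 : Fin (n + 1)), z i ^ ((k : ℤ) + 1)) *
        fnk q (n + 1) k z := by
  rw [fnk_eq_sum_prod_thetaRatio, fnk_eq_sum_prod_thetaRatio, mul_left_comm]
  congr 1
  rw [mul_sum]
  refine sum_congr rfl fun σ _ => ?_
  have hσ : (z ∘ σ) (σ.symm 0) = z 0 := by simp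
  rw [update_comp_equiv, ← hσ, prod_thetaRatio_update (x := z ∘ σ) hq0 hk (fun _ => hz _), hσ,
    ← prod_univ_erase_comp_equiv σ (fun i => z i ^ ((k : ℤ) + 1))]
  rfl

theorem fnk_quasi_periodicity (q : ℂ) (hq0 : q ≠ 0) (hq : ‖q‖ < 1) (n k : ℕ) (hk : 1 ≤ k)
    (z : Fin (n + 1) → ℂ) (hz : ∀ i, z i ≠ 0)
    (hden : DenOK q (n + 1) z)
    (hden' : DenOK q (n + 1) (Function.update z 0 (q * z 0))) :
    fnk q (n + 1) k (Function.update z 0 (q * z 0)) =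
      (-1 : ℂ) ^ (k - 1) * q ^ (-(((k : ℤ) + 1) * ((k : ℤ) - 2) / 2)) *
        z 0 ^ (-(k : ℤ) ^ 2 + 1) *
        (∏ i ∈ Finset.univ.erase (0 : Fin (n + 1)), z i ^ ((k : ℤ) + 1)) *
        fnk q (n + 1) k z :=
  fnk_quasi_periodicity_general q hq0 n k hk z hz
end

section
/- The functions f_{n,k} satisfy the recurrence f_{n+1,k}(z₁,...,z_{n+1}) = -∑_{i=1}^{n+1} [g(z₁^{-1}⋯z_i^k⋯z_{n+1}^{-1}) / g(z₁^{-1}⋯z_{n+1}^{-1})] · f_{n,k}(z₁,...,ẑᵢ,...,z_{n+1}), where in the numerator the i-th factor z_i^{-1} is replaced by z_i^k and ẑᵢ means z_i is omitted. -/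
open Finset

/-! Group the orderings `σ` of the `n + 1` variables by their last entry `i = σ (n + 1)`; the
first `n` entries then run through the other variables in the order of some `τ ∈ Sₙ`. In the
summand for `σ` only the last factors of the numerator and of the denominator involve `i`: they are
`g(z₁⁻¹⋯zᵢᵏ⋯zₙ₊₁⁻¹)` and `g(z₁⁻¹⋯zₙ₊₁⁻¹)`, independent of `τ`, and what remains is the summand of
`f_{n,k}(z₁,…,ẑᵢ,…,zₙ₊₁)` for `τ`. -/

namespace Equiv.Perm

variable {n : ℕ}

def insertLast (i : Fin (n + 1)) (τ : Perm (Fin n)) : Perm (Fin (n + 1)) :=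
  finSuccEquivLast.trans (τ.optionCongr.trans (finSuccEquiv' i).symm)

@[simp]
theorem insertLast_last (i : Fin (n + 1)) (τ : Perm (Fin n)) :
    insertLast i τ (Fin.last n) = i := by
  simp [insertLast]

@[simp]
theorem insertLast_castSucc (i : Fin (n + 1)) (τ : Perm (Fin n)) (j : Fin n) :
    insertLast i τ j.castSucc = i.succAbove (τ j) := by
  simp [insertLast]

theorem insertLast_injective :
    Function.Injective fun p : Fin (n + 1) × Perm (Fin n) => insertLast p.1 p.2 := by
  rintro ⟨i, τ⟩ ⟨i', τ'⟩ h
  have hi : i = i' := by simpa using congr($h (Fin.last n))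
  subst hi
  refine Prod.ext rfl (Equiv.ext fun j => Fin.succAbove_right_injective (p := i) ?_)
  simpa using congr($h j.castSucc)

theorem insertLast_bijective :
    Function.Bijective fun p : Fin (n + 1) × Perm (Fin n) => insertLast p.1 p.2 := by
  rw [Fintype.bijective_iff_injective_and_card]
  exact ⟨insertLast_injective, by simp [Fintype.card_perm, Nat.factorial_succ]⟩

theorem sum_eq_sum_insertLast {M : Type*} [AddCommMonoid M] (F : Perm (Fin (n + 1)) → M) :
    ∑ σ, F σ = ∑ i, ∑ τ : Perm (Fin n), F (insertLast i τ) := by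
  rw [← Fintype.sum_prod_type', Fintype.sum_bijective _ insertLast_bijective _ _ fun _ => rfl]

end Equiv.Perm

theorem Fin.prod_erase_eq_prod_succAbove {M : Type*} [CommMonoid M] {n : ℕ} (f : Fin (n + 1) → M)
    (i : Fin (n + 1)) : ∏ l ∈ univ.erase i, f l = ∏ l, f (i.succAbove l) := by
  rw [Fin.univ_succAbove n i, Finset.erase_cons, prod_map]
  rfl

section Summand

variable {G L : Type*} [DivisionCommMonoid G] [DivisionCommMonoid L]

def fnkSummand (g : G → L) (k : ℤ) {m : ℕ} (w : Fin m → G) : L :=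
  (∏ j, g ((∏ l < j, (w l)⁻¹) * w j ^ k)) / ∏ j, g (∏ l ≤ j, (w l)⁻¹)

theorem fnkSummand_succ (g : G → L) (k : ℤ) {m : ℕ} (w : Fin (m + 1) → G) :
    fnkSummand g k w = fnkSummand g k (w ∘ Fin.castSucc) *
      (g ((∏ l : Fin m, (w l.castSucc)⁻¹) * w (Fin.last m) ^ k) / g (∏ l, (w l)⁻¹)) := by
  have hlast : Iic (Fin.last m) = univ := by rw [← Fin.top_eq_last, Iic_top]
  rw [fnkSummand, fnkSummand, Fin.prod_univ_castSucc, Fin.prod_univ_castSucc, hlast,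
    Fin.Iio_last_eq_map, prod_map, mul_div_mul_comm]
  simp only [Fin.prod_Iio_castSucc, Fin.prod_Iic_castSucc, Fin.coe_castSuccEmb, Function.comp_apply]

theorem fnkSummand_comp_insertLast (g : G → L) (k : ℤ) {n : ℕ} (z : Fin (n + 1) → G)
    (i : Fin (n + 1)) (τ : Equiv.Perm (Fin n)) :
    fnkSummand g k (z ∘ Equiv.Perm.insertLast i τ) = fnkSummand g k ((z ∘ i.succAbove) ∘ τ) *
      (g ((∏ l ∈ univ.erase i, (z l)⁻¹) * z i ^ k) / g (∏ l, (z l)⁻¹)) := by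
  have hinit : (z ∘ Equiv.Perm.insertLast i τ) ∘ Fin.castSucc = (z ∘ i.succAbove) ∘ τ := by
    ext j
    simp
  have hprefix :
      ∏ l : Fin n, (z (Equiv.Perm.insertLast i τ l.castSucc))⁻¹ = ∏ l ∈ univ.erase i, (z l)⁻¹ := by
    simp only [Equiv.Perm.insertLast_castSucc, Fin.prod_erase_eq_prod_succAbove]
    exact Equiv.prod_comp τ fun l => (z (i.succAbove l))⁻¹
  rw [fnkSummand_succ, hinit]
  simp only [Function.comp_apply, hprefix, Equiv.Perm.insertLast_last,
    Equiv.prod_comp (Equiv.Perm.insertLast i τ) fun l => (z l)⁻¹]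

end Summand

theorem fnk_eq_sum_fnkSummand (q : ℂ) (n k : ℕ) (z : Fin n → ℂ) :
    fnk q n k z = (-1) ^ n * ∑ σ : Equiv.Perm (Fin n), fnkSummand (theta q) k (z ∘ σ) := by
  simp only [fnk, fnkSummand, filter_gt_eq_Iio, filter_ge_eq_Iic]
  rfl

theorem fnk_recurrence_general (q : ℂ) (n k : ℕ) (z : Fin (n + 1) → ℂ) :
    fnk q (n + 1) k z =
      -∑ i : Fin (n + 1),
        (theta q ((∏ l ∈ Finset.univ.erase i, (z l)⁻¹) * z i ^ (k : ℤ)) /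
            theta q (∏ l, (z l)⁻¹)) *
          fnk q n k (z ∘ i.succAbove) := by
  simp only [fnk_eq_sum_fnkSummand, Equiv.Perm.sum_eq_sum_insertLast, fnkSummand_comp_insertLast,
    ← sum_mul, pow_succ]
  rw [mul_sum, ← sum_neg_distrib]
  exact sum_congr rfl fun i _ => by ring

theorem fnk_recurrence (q : ℂ) (hq0 : q ≠ 0) (hq : ‖q‖ < 1) (n k : ℕ) (hk : 1 ≤ k)
    (z : Fin (n + 1) → ℂ) (hz : ∀ i, z i ≠ 0)
    (hden : theta q (∏ l, (z l)⁻¹) ≠ 0)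
    (hdenz : DenOK q (n + 1) z)
    (hdenz' : ∀ i : Fin (n + 1), DenOK q n (z ∘ i.succAbove)) :
    fnk q (n + 1) k z =
      -∑ i : Fin (n + 1),
        (theta q ((∏ l ∈ Finset.univ.erase i, (z l)⁻¹) * z i ^ (k : ℤ)) /
            theta q (∏ l, (z l)⁻¹)) *
          fnk q n k (z ∘ i.succAbove) :=
  fnk_recurrence_general q n k z
end

section
/- In the limit q → 0, the function f_{n,k}(z₁,...,zₙ) specializes to ∑ z₁^{i₁}⋯zₙ^{iₙ}, the sum over all injections (i₁,...,iₙ) of {1,...,n} into {1,...,k} (i.e. tuples of pairwise distinct integers 1 ≤ i₁,...,iₙ ≤ k). In particular, for n = k it equals the functional realization ψ_k(x₁x₂⋯x_k) = ∑_{σ∈S_k} z_{σ(1)} z_{σ(2)}² ⋯ z_{σ(k)}^k. -/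
/-!
Fixing the permutation's last value `σ(n+1) = i` splits `f_{n+1,k}` into the recurrence
`f_{n+1,k}(z) = -∑ᵢ g(z₁⁻¹⋯zᵢᵏ⋯z_{n+1}⁻¹) / g(z₁⁻¹⋯z_{n+1}⁻¹) · f_{n,k}(ẑᵢ)`, valid for every `q`.
At `q = 0` we have `g(w) = 1 - w`, and with `P = z₁⋯z_{n+1}` the recurrence reads
`(P - 1) f_{n+1,k}(z) = ∑ᵢ (zᵢ^{k+1} - P) f_{n,k}(ẑᵢ)`.
The injection sum `E_k(z) = ∑ z₁^{i₁}⋯z_{n+1}^{i_{n+1}}` (`injSum (Icc 1 k) z`) satisfies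
the same identity: expanding `E_{k+1}` according to where the value `k + 1` is taken gives
`E_k(z) + ∑ᵢ zᵢ^{k+1} E_k(ẑᵢ)`, and according to where the value `1` is taken gives
`P E_k(z) + ∑ᵢ P E_k(ẑᵢ)`, since shifting all values by one multiplies each monomial by `P`.
Both sides agree for `n = 0`.
-/

open Finset

lemma theta_zero (z : ℂ) : theta 0 z = 1 - z := by
  have hvanish : ∀ i ∉ ({0, 1} : Finset ℤ),
      (-1 : ℂ) ^ i * z ^ i * (0 : ℂ) ^ (i * (i - 1) / 2) = 0 := by
    intro i hi
    simp only [mem_insert, mem_singleton, not_or] at hi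
    have : 2 ≤ i * (i - 1) := by
      rcases lt_or_ge i 0 with h | h
      · nlinarith
      · nlinarith [show 2 ≤ i by omega]
    rw [zero_zpow _ (by omega), mul_zero]
  rw [theta, tsum_eq_sum hvanish]
  norm_num
  ring

section PermSnoc

variable {n : ℕ}

def permSnoc (i : Fin (n + 1)) (τ : Equiv.Perm (Fin n)) : Equiv.Perm (Fin (n + 1)) :=
  finSuccEquivLast.trans ((Equiv.optionCongr τ).trans (finSuccEquiv' i).symm)

@[simp]
lemma permSnoc_castSucc (i : Fin (n + 1)) (τ : Equiv.Perm (Fin n)) (m : Fin n) :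
    permSnoc i τ m.castSucc = i.succAbove (τ m) := by
  simp [permSnoc, finSuccEquivLast_castSucc]

@[simp]
lemma permSnoc_last (i : Fin (n + 1)) (τ : Equiv.Perm (Fin n)) :
    permSnoc i τ (Fin.last n) = i := by
  simp [permSnoc, finSuccEquivLast_last]

lemma permSnoc_bijective :
    Function.Bijective fun p : Fin (n + 1) × Equiv.Perm (Fin n) => permSnoc p.1 p.2 := by
  rw [Fintype.bijective_iff_injective_and_card]
  refine ⟨?_, by simp [Fintype.card_perm, Nat.factorial_succ]⟩
  rintro ⟨i, τ⟩ ⟨i', τ'⟩ h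
  obtain rfl : i = i' := by simpa using DFunLike.congr_fun h (Fin.last n)
  obtain rfl : τ = τ' := Equiv.ext fun m => by simpa using DFunLike.congr_fun h m.castSucc
  rfl

variable {M : Type*} [CommMonoid M] (f : Fin (n + 1) → M) (i : Fin (n + 1))
  (τ : Equiv.Perm (Fin n))

lemma prod_filter_lt_castSucc_permSnoc (j : Fin n) :
    ∏ l ∈ univ.filter (· < j.castSucc), f (permSnoc i τ l)
      = ∏ l ∈ univ.filter (· < j), f (i.succAbove (τ l)) := by
  simp only [filter_gt_eq_Iio, Fin.prod_Iio_castSucc, permSnoc_castSucc]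

lemma prod_filter_le_castSucc_permSnoc (j : Fin n) :
    ∏ l ∈ univ.filter (· ≤ j.castSucc), f (permSnoc i τ l)
      = ∏ l ∈ univ.filter (· ≤ j), f (i.succAbove (τ l)) := by
  simp only [filter_ge_eq_Iic, Fin.prod_Iic_castSucc, permSnoc_castSucc]

lemma prod_filter_lt_last_permSnoc :
    ∏ l ∈ univ.filter (· < Fin.last n), f (permSnoc i τ l) = ∏ m, f (i.succAbove m) := by
  rw [filter_gt_eq_Iio, Fin.Iio_last_eq_map, prod_map]
  simpa using Equiv.prod_comp τ (fun m => f (i.succAbove m))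

lemma prod_filter_le_last_permSnoc :
    ∏ l ∈ univ.filter (· ≤ Fin.last n), f (permSnoc i τ l) = ∏ l, f l := by
  rw [filter_true_of_mem fun l _ => Fin.le_last l, Equiv.prod_comp]

end PermSnoc

section Recurrence

variable {n : ℕ}

noncomputable def fnkTerm (q : ℂ) (k : ℕ) (z : Fin n → ℂ) (σ : Equiv.Perm (Fin n)) : ℂ :=
  (∏ j : Fin n, theta q ((∏ l ∈ univ.filter (· < j), (z (σ l))⁻¹) * z (σ j) ^ (k : ℤ))) /
    ∏ j : Fin n, theta q (∏ l ∈ univ.filter (· ≤ j), (z (σ l))⁻¹)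

lemma fnk_eq_sum_fnkTerm (q : ℂ) (k : ℕ) (z : Fin n → ℂ) :
    fnk q n k z = (-1) ^ n * ∑ σ, fnkTerm q k z σ := rfl

lemma fnkTerm_permSnoc (q : ℂ) (k : ℕ) (z : Fin (n + 1) → ℂ) (i : Fin (n + 1))
    (τ : Equiv.Perm (Fin n)) :
    fnkTerm q k z (permSnoc i τ) = fnkTerm q k (i.removeNth z) τ *
      (theta q ((∏ m, (i.removeNth z m)⁻¹) * z i ^ (k : ℤ)) / theta q (∏ l, (z l)⁻¹)) := by
  rw [fnkTerm, fnkTerm, Fin.prod_univ_castSucc, Fin.prod_univ_castSucc, mul_div_mul_comm]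
  simp only [prod_filter_lt_castSucc_permSnoc (fun l => (z l)⁻¹),
    prod_filter_le_castSucc_permSnoc (fun l => (z l)⁻¹),
    prod_filter_lt_last_permSnoc (fun l => (z l)⁻¹), prod_filter_le_last_permSnoc
    (fun l => (z l)⁻¹), permSnoc_castSucc, permSnoc_last, Fin.removeNth_apply]

theorem fnk_succ (q : ℂ) (k : ℕ) (z : Fin (n + 1) → ℂ) :
    fnk q (n + 1) k z = -∑ i : Fin (n + 1),
      theta q ((∏ m, (i.removeNth z m)⁻¹) * z i ^ (k : ℤ)) / theta q (∏ l, (z l)⁻¹) *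
        fnk q n k (i.removeNth z) := by
  have hsplit : ∑ σ, fnkTerm q k z σ = ∑ i : Fin (n + 1), ∑ τ, fnkTerm q k z (permSnoc i τ) :=
    (Fintype.sum_bijective _ permSnoc_bijective _ _ fun _ => rfl).symm.trans
      (Fintype.sum_prod_type _)
  rw [fnk_eq_sum_fnkTerm, hsplit, mul_sum, ← sum_neg_distrib]
  refine sum_congr rfl fun i _ => ?_
  simp only [fnkTerm_permSnoc, ← sum_mul, fnk_eq_sum_fnkTerm]
  ring

end Recurrence

section DenOK

variable {q : ℂ} {n : ℕ}

lemma DenOK.theta_prod_inv_ne_zero {z : Fin (n + 1) → ℂ} (h : DenOK q (n + 1) z) :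
    theta q (∏ l, (z l)⁻¹) ≠ 0 := by
  simpa [filter_true_of_mem fun l _ => Fin.le_last l] using h 1 (Fin.last n)

lemma DenOK.removeNth {z : Fin (n + 1) → ℂ} (h : DenOK q (n + 1) z) (i : Fin (n + 1)) :
    DenOK q n (i.removeNth z) := fun τ j => by
  simpa only [prod_filter_le_castSucc_permSnoc (fun l => (z l)⁻¹), Fin.removeNth_apply]
    using h (permSnoc i τ) j.castSucc

end DenOK

lemma Fin.injective_iff_removeNth {α : Type*} {n : ℕ} (f : Fin (n + 1) → α) (i : Fin (n + 1)) :
    Function.Injective f ↔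
      f i ∉ Set.range (i.removeNth f) ∧ Function.Injective (i.removeNth f) := by
  refine ⟨fun hf => ⟨fun ⟨m, hm⟩ => Fin.succAbove_ne i m (hf hm),
    hf.comp Fin.succAbove_right_injective⟩, fun ⟨hi, hinj⟩ a b hab => ?_⟩
  obtain ha | ⟨a, rfl⟩ := Fin.eq_self_or_eq_succAbove i a <;>
    obtain hb | ⟨b, rfl⟩ := Fin.eq_self_or_eq_succAbove i b
  · rw [ha, hb]
  · exact (hi ⟨b, ha ▸ hab.symm⟩).elim
  · exact (hi ⟨a, hb ▸ hab⟩).elim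
  · rw [hinj hab]

section InjSum

variable {R : Type*} [CommSemiring R] {m : ℕ}

def injSum (s : Finset ℕ) (z : Fin m → R) : R :=
  ∑ f ∈ (Fintype.piFinset fun _ => s).filter Function.Injective, ∏ i, z i ^ f i

lemma injSum_fin_zero (s : Finset ℕ) (z : Fin 0 → R) : injSum s z = 1 := by
  simp [injSum, Function.injective_of_subsingleton]

lemma sum_embedding_eq_injSum (k : ℕ) (z : Fin m → R) :
    ∑ ι : Fin m ↪ Fin k, ∏ i, z i ^ ((ι i : ℕ) + 1) = injSum (Icc 1 k) z := by
  refine sum_bij (fun ι _ j => (ι j : ℕ) + 1) (fun ι _ => ?_) (fun ι _ ι' _ h => ?_)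
    (fun f hf => ?_) fun _ _ => rfl
  · simp only [mem_filter, Fintype.mem_piFinset, mem_Icc]
    exact ⟨fun j => ⟨by omega, (ι j).isLt⟩,
      fun a b hab => ι.injective (Fin.ext (by simpa using hab))⟩
  · ext j
    simpa using congrFun h j
  · simp only [mem_filter, Fintype.mem_piFinset, mem_Icc] at hf
    obtain ⟨hmem, hinj⟩ := hf
    refine ⟨⟨fun j => ⟨f j - 1, by have := hmem j; omega⟩, fun a b hab => hinj ?_⟩,
      mem_univ _, funext fun j => ?_⟩
    · have := hmem a; have := hmem b; have := congrArg Fin.val hab; dsimp at this; omega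
    · have := hmem j
      show f j - 1 + 1 = f j
      omega

lemma sum_filter_exists_eq_sum_sum_filter {ι α M : Type*} [Fintype ι] [DecidableEq α]
    [AddCommMonoid M]
    (A : Finset (ι → α)) (hA : ∀ f ∈ A, Function.Injective f) (v : α) (g : (ι → α) → M) :
    ∑ f ∈ A with ∃ i, f i = v, g f = ∑ i, ∑ f ∈ A with f i = v, g f := by
  simp only [sum_filter]
  rw [sum_comm]
  refine sum_congr rfl fun f hf => ?_
  by_cases h : ∃ j, f j = v
  · obtain ⟨j, hj⟩ := h
    rw [if_pos ⟨j, hj⟩, sum_eq_single_of_mem j (mem_univ j)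
      (fun i _ hi => if_neg fun hiv => hi (hA f hf (hiv.trans hj.symm))), if_pos hj]
  · push Not at h
    rw [if_neg (not_exists.2 h), sum_eq_zero fun i _ => if_neg (h i)]

lemma sum_filter_apply_eq_pow_mul_injSum_erase {s : Finset ℕ} {v : ℕ} (hv : v ∈ s)
    (z : Fin (m + 1) → R) (i : Fin (m + 1)) :
    ∑ f ∈ (Fintype.piFinset fun _ => s).filter Function.Injective with f i = v, ∏ j, z j ^ f j
      = z i ^ v * injSum (s.erase v) (i.removeNth z) := by
  rw [injSum, mul_sum]
  refine (sum_nbij' (Fin.insertNth i v) i.removeNth (fun g hg => ?_) (fun f hf => ?_)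
    (fun g _ => Fin.removeNth_insertNth i v g) (fun f hf => ?_) (fun g _ => ?_)).symm
  · simp only [mem_filter, Fintype.mem_piFinset, mem_erase] at hg ⊢
    rw [Fin.injective_iff_removeNth _ i, Fin.forall_iff_succAbove i]
    simp [hv, hg.1, hg.2]
  · simp only [mem_filter, Fintype.mem_piFinset, mem_erase] at hf ⊢
    rw [Fin.injective_iff_removeNth _ i] at hf
    obtain ⟨⟨hs, hi, hinj⟩, rfl⟩ := hf
    exact ⟨fun a => ⟨fun h => hi ⟨a, h⟩, hs _⟩, hinj⟩
  · simp only [mem_filter] at hf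
    rw [← hf.2, Fin.insertNth_self_removeNth]
  · rw [Fin.prod_univ_succAbove _ i]
    simp [Fin.removeNth]

lemma injSum_eq_injSum_erase_add {s : Finset ℕ} {v : ℕ} (hv : v ∈ s) (z : Fin (m + 1) → R) :
    injSum s z = injSum (s.erase v) z + ∑ i, z i ^ v * injSum (s.erase v) (i.removeNth z) := by
  have hmiss : ((Fintype.piFinset fun _ : Fin (m + 1) => s).filter Function.Injective).filter
      (fun f => ¬∃ i, f i = v)
        = (Fintype.piFinset fun _ => s.erase v).filter Function.Injective := by
    ext f
    simp only [mem_filter, Fintype.mem_piFinset, mem_erase, not_exists, forall_and]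
    tauto
  rw [injSum, ← sum_filter_not_add_sum_filter _ (fun f => ∃ i, f i = v), hmiss]
  congr 1
  have hhit := sum_filter_exists_eq_sum_sum_filter
    ((Fintype.piFinset fun _ : Fin (m + 1) => s).filter Function.Injective)
    (fun f hf => (mem_filter.1 hf).2) v fun f => ∏ j, z j ^ f j
  rw [sum_congr rfl fun i _ => sum_filter_apply_eq_pow_mul_injSum_erase hv z i] at hhit
  -- `convert` identifies the instances `Nat.decidableExistsFin` and
  -- `Fintype.decidableExistsFintype` deciding `∃ i, f i = v`
  convert hhit

lemma injSum_map_addRightEmbedding (s : Finset ℕ) (c : ℕ) (z : Fin m → R) :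
    injSum (s.map (addRightEmbedding c)) z = (∏ i, z i ^ c) * injSum s z := by
  have hinj : ∀ f : Fin m → ℕ, Function.Injective (fun i => f i + c) ↔ Function.Injective f :=
    (add_left_injective c).of_comp_iff
  rw [injSum, injSum, map_eq_image, Fintype.piFinset_image, filter_image]
  simp only [addRightEmbedding_apply, hinj]
  rw [sum_image fun f _ g _ h => funext fun i => add_right_cancel (congrFun h i), mul_sum]
  simp only [pow_add, prod_mul_distrib, mul_comm]

end InjSum

lemma injSum_Icc_mul_prod_sub_one {R : Type*} [CommRing R] {n : ℕ} (k : ℕ)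
    (z : Fin (n + 1) → R) :
    (∏ l, z l - 1) * injSum (Icc 1 k) z
      = ∑ i, (z i ^ (k + 1) - ∏ l, z l) * injSum (Icc 1 k) (i.removeNth z) := by
  have htop : (Icc 1 (k + 1)).erase (k + 1) = Icc 1 k := by
    ext; simp only [mem_erase, mem_Icc]; omega
  have hbot : (Icc 1 (k + 1)).erase 1 = (Icc 1 k).map (addRightEmbedding 1) := by
    rw [map_add_right_Icc]; ext; simp only [mem_erase, mem_Icc]; omega
  have hremove_top := injSum_eq_injSum_erase_add (right_mem_Icc.2 (by omega : 1 ≤ k + 1)) z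
  have hremove_bot := injSum_eq_injSum_erase_add (left_mem_Icc.2 (by omega : 1 ≤ k + 1)) z
  simp only [htop] at hremove_top
  simp only [hbot, injSum_map_addRightEmbedding, pow_one, ← mul_assoc, Fin.mul_prod_removeNth]
    at hremove_bot
  simp only [sub_mul, sum_sub_distrib, ← mul_sum] at hremove_bot ⊢
  linear_combination hremove_top - hremove_bot

lemma fnk_fin_zero (q : ℂ) (k : ℕ) (z : Fin 0 → ℂ) : fnk q 0 k z = 1 := by
  simp [fnk_eq_sum_fnkTerm, fnkTerm]

lemma one_sub_div_one_sub_inv {K : Type*} [Field K] {x Q : K} (hx : x ≠ 0) (hQ : Q ≠ 0)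
    (hxQ : x * Q ≠ 1) (k : ℕ) :
    (1 - Q⁻¹ * x ^ k) / (1 - (x * Q)⁻¹) = (x * Q - x ^ (k + 1)) / (x * Q - 1) := by
  have : x * Q - 1 ≠ 0 := sub_ne_zero.2 hxQ
  field_simp
  ring

theorem fnk_zero_eq_injSum {n : ℕ} (k : ℕ) {z : Fin n → ℂ} (hz : ∀ i, z i ≠ 0)
    (hden : DenOK 0 n z) : fnk 0 n k z = injSum (Icc 1 k) z := by
  induction n with
  | zero => rw [fnk_fin_zero, injSum_fin_zero]
  | succ n ih =>
    have hP : ∏ l, z l ≠ 1 := fun hP => hden.theta_prod_inv_ne_zero <| by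
      rw [theta_zero, prod_inv_distrib, hP, inv_one, sub_self]
    have hterm : ∀ i, theta 0 ((∏ m, (i.removeNth z m)⁻¹) * z i ^ (k : ℤ)) /
        theta 0 (∏ l, (z l)⁻¹) * fnk 0 n k (i.removeNth z)
          = -((z i ^ (k + 1) - ∏ l, z l) * injSum (Icc 1 k) (i.removeNth z) / (∏ l, z l - 1)) := by
      intro i
      rw [ih (z := i.removeNth z) (fun _ => hz _) (hden.removeNth i), theta_zero, theta_zero]
      have hQ : ∏ m, i.removeNth z m ≠ 0 := prod_ne_zero_iff.2 fun m _ => hz _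
      rw [prod_inv_distrib, prod_inv_distrib, zpow_natCast, ← Fin.mul_prod_removeNth i z,
        one_sub_div_one_sub_inv (hz i) hQ (by rwa [Fin.mul_prod_removeNth])]
      ring
    rw [fnk_succ, sum_congr rfl fun i _ => hterm i, sum_neg_distrib, neg_neg, ← sum_div,
      ← injSum_Icc_mul_prod_sub_one, mul_div_cancel_left₀ _ (sub_ne_zero.2 hP)]

theorem fnk_at_q_zero_general (n k : ℕ) (z : Fin n → ℂ) (hz : ∀ i, z i ≠ 0)
    (hden : DenOK 0 n z) :
    fnk 0 n k z = ∑ ι : Fin n ↪ Fin k, ∏ i : Fin n, z i ^ ((ι i : ℕ) + 1) := by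
  rw [fnk_zero_eq_injSum k hz hden, sum_embedding_eq_injSum]

/-- At `q = 0` (where `g(z) = 1 - z`), `f_{n,k}` specializes to
`∑ z₁^{i₁} ⋯ zₙ^{iₙ}`, the sum over all injections of `{1,…,n}` into `{1,…,k}`;
for `n = k` this is `ψ_k(x₁⋯x_k) = ∑_{σ∈S_k} z_{σ(1)} z_{σ(2)}² ⋯ z_{σ(k)}^k`. -/
theorem fnk_at_q_zero (n k : ℕ) (hk : 1 ≤ k) (z : Fin n → ℂ) (hz : ∀ i, z i ≠ 0)
    (hden : DenOK 0 n z) :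
    fnk 0 n k z = ∑ ι : Fin n ↪ Fin k, ∏ i : Fin n, z i ^ ((ι i : ℕ) + 1) :=
  fnk_at_q_zero_general n k z hz hden
end
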